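/- Let φ ∈ O_K[x] be Eisenstein of degree n with root α, ρ its ramification polynomial, and let β = α + γ·α^{m+1} with γ ∈ L = K(α), v(γ) = 0, m ∈ ℤ_{>0}, be another uniformizer of L with minimal polynomial ψ ∈ O_K[x]. Then: (a) Σ_{i=0}^{n−1} (φ_i − ψ_i)·β^i = α^n·ρ(γ·α^m); moreover if 0 ≤ j < n and j ≡ v_α(ρ(γα^m)) mod n, then φ_j − ψ_j = α^n·ρ(γα^m) up to higher-valuation terms, i.e. (φ_j − ψ_j) ∼ the term of minimal valuation; (b) if 0 ≤ k < n and k ≡ c mod n where c = min_{0≤i≤n}(v_α(ρ_i) + i·m), then residue( (φ_k − ψ_k) / (α^{n−k}·α^c) ) = S_m(γ̄), where S_m is the residual polynomial of the (−m)-component of the ramification polygon and γ̄ the residue of γ. -/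

import Mathlib

open Polynomial

namespace RamificationStmt19

variable {K L : Type*} [Field K] [Field L]

def IsEisenstein (v : AddValuation K (WithTop ℤ)) (φ : Polynomial K) : Prop :=
  φ.Monic ∧ (∀ i < φ.natDegree, ((1 : ℤ) : WithTop ℤ) ≤ v (φ.coeff i)) ∧
    v (φ.coeff 0) = ((1 : ℤ) : WithTop ℤ)

/-- Coefficients of the ramification polynomial `ρ(x) = φ(αx+α)/α^n`. -/
noncomputable def rho [Algebra K L] (φ : Polynomial K) (α : L) (n i : ℕ) : L :=
  ∑ k ∈ Finset.Icc i n, (Nat.choose k i : L) * (algebraMap K L (φ.coeff k)) * α ^ ((k : ℤ) - (n : ℤ))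

/-- The value `ρ(z)` of the ramification polynomial at `z ∈ L`. -/
noncomputable def rhoEval [Algebra K L] (φ : Polynomial K) (α : L) (n : ℕ) (z : L) : L :=
  ∑ i ∈ Finset.range (n + 1), rho φ α n i * z ^ i

/-- The valuation ring `O_L = {x | w(x) ≥ 0}`. -/
def vintegers (w : AddValuation L (WithTop ℤ)) : Subring L where
  carrier := {x | 0 ≤ w x}
  zero_mem' := by simp [AddValuation.map_zero]
  one_mem' := by simp [AddValuation.map_one]
  add_mem' := by
    intro a b ha hb
    exact le_trans (le_min ha hb) (w.map_add a b)
  neg_mem' := by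
    intro a ha
    simpa [AddValuation.map_neg] using ha
  mul_mem' := by
    intro a b ha hb
    simp only [Set.mem_setOf_eq] at *
    rw [w.map_mul]
    exact add_nonneg ha hb

open scoped Classical in
/-- Reduction modulo the maximal ideal, extended by `0` outside the valuation ring. -/
noncomputable def vred {𝕜 : Type*} [Field 𝕜] (w : AddValuation L (WithTop ℤ))
    (res : vintegers w →+* 𝕜) (x : L) : 𝕜 :=
  if h : x ∈ vintegers w then res ⟨x, h⟩ else 0

/-- The `α`-content exponent `c = min_{0 ≤ i ≤ n} (v_α(ρ_i) + i·m)` of `ρ(α^m x)`. -/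
noncomputable def contExp [Algebra K L] (w : AddValuation L (WithTop ℤ)) (φ : Polynomial K)
    (α : L) (n m : ℕ) : WithTop ℤ :=
  (Finset.range (n + 1)).inf (fun i => w (rho φ α n i) + ((i * m : ℕ) : WithTop ℤ))

/-- The `α`-content exponent as an integer. -/
noncomputable def contExpZ [Algebra K L] (w : AddValuation L (WithTop ℤ)) (φ : Polynomial K)
    (α : L) (n m : ℕ) : ℤ :=
  WithTop.untopD 0 (contExp w φ α n m)

/-- The residual polynomial `S_m(x) = red(ρ(α^m x)/α^c)` of the `(−m)`-component of the
ramification polygon. -/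
noncomputable def SmPoly {𝕜 : Type*} [Field 𝕜] [Algebra K L] (w : AddValuation L (WithTop ℤ))
    (res : vintegers w →+* 𝕜) (φ : Polynomial K) (α : L) (n m : ℕ) : Polynomial 𝕜 :=
  ∑ i ∈ Finset.range (n + 1),
    Polynomial.C (vred w res (rho φ α n i * α ^ ((i * m : ℤ) - contExpZ w φ α n m))) *
      Polynomial.X ^ i

end RamificationStmt19


/-!
Since `ψ(β) = 0` and `φ`, `ψ` are both monic of degree `n`, `∑_{i<n} (φ_i - ψ_i) β^i = φ(β)`,
and `φ(β) = φ(α·γα^m + α) = α^n ρ(γα^m)`. Valuations of nonzero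
elements of `K` are multiples of `n` in `L` and `w β = 1`, so the valuation of `(φ_i - ψ_i) β^i`
is `≡ i (mod n)`: the terms of the sum have pairwise distinct valuations (this also forces
`deg ψ = n`). Hence every term has valuation at least that of the sum, with equality only at
the index congruent to it mod `n`, so that single term agrees with the sum to higher order.
For (b) divide by `α^(n+c)`: as `β^k = α^k (1 + γα^m)^k` and `1 + γα^m ≡ 1`, the residue of
`(φ_k - ψ_k) / α^(n-k+c)` is that of `ρ(γα^m) / α^c`, which is `S_m(γ̄)`.
-/

namespace RamificationStmt19

theorem nonneg_add_neg_of_coe_le {c : ℤ} {y : WithTop ℤ} (h : (c : WithTop ℤ) ≤ y) :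
    0 ≤ y + ((-c : ℤ) : WithTop ℤ) := by
  cases y with
  | top => simp
  | coe t => norm_cast at h ⊢; omega

section Valuation

variable {L : Type*} [Field L] (w : AddValuation L (WithTop ℤ))

theorem map_pow_of_map_eq_one {α : L} (hα : w α = ((1 : ℤ) : WithTop ℤ)) (k : ℕ) :
    w (α ^ k) = (k : WithTop ℤ) := by
  rw [w.map_pow, hα, ← WithTop.coe_nsmul, nsmul_eq_mul, mul_one, WithTop.coe_natCast]

theorem map_zpow_of_map_eq_one {α : L} (hα : w α = ((1 : ℤ) : WithTop ℤ)) (t : ℤ) :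
    w (α ^ t) = (t : WithTop ℤ) := by
  obtain ⟨k, rfl | rfl⟩ := Int.eq_nat_or_neg t
  · rw [zpow_natCast, map_pow_of_map_eq_one w hα, WithTop.coe_natCast]
  · rw [zpow_neg, w.map_inv, zpow_natCast, map_pow_of_map_eq_one w hα, ← WithTop.coe_natCast,
      ← WithTop.LinearOrderedAddCommGroup.coe_neg]

theorem map_one_add_eq_zero {ε : L} (hε : 0 < w ε) : w (1 + ε) = 0 := by
  rw [w.map_add_eq_of_lt_left (by rwa [w.map_one]), w.map_one]

theorem map_sum_eq_inf {ι : Type*} {s : Finset ι} {f : ι → L}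
    (hinj : ∀ i ∈ s, ∀ j ∈ s, w (f i) = w (f j) → w (f i) ≠ ⊤ → i = j) :
    w (∑ i ∈ s, f i) = s.inf fun i => w (f i) := by
  classical
  by_cases htop : s.inf (fun i => w (f i)) = ⊤
  · have hzero : ∀ i ∈ s, f i = 0 := fun i hi =>
      w.top_iff.mp (top_le_iff.mp (htop ▸ Finset.inf_le (f := fun i => w (f i)) hi))
    rw [Finset.sum_eq_zero hzero, w.map_zero, htop]
  obtain ⟨j, hj, hinf⟩ := Finset.exists_mem_eq_inf s
    (Finset.nonempty_of_ne_empty (by rintro rfl; simp at htop)) (fun i => w (f i))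
  rw [hinf] at htop ⊢
  rw [← Finset.add_sum_erase s f hj, w.map_add_eq_of_lt_left]
  refine w.map_lt_sum htop fun i hi => lt_of_le_of_ne ?_ fun h => ?_
  · exact hinf ▸ Finset.inf_le (Finset.mem_of_mem_erase hi)
  · exact Finset.ne_of_mem_erase hi (hinj i (Finset.mem_of_mem_erase hi) j hj h.symm (h ▸ htop))

theorem lt_map_sub_sum {ι : Type*} [DecidableEq ι] {s : Finset ι} {f : ι → L} {j : ι}
    (hj : j ∈ s) (hinj : ∀ i ∈ s, ∀ j ∈ s, w (f i) = w (f j) → w (f i) ≠ ⊤ → i = j)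
    {c : ℤ} (hc : (c : WithTop ℤ) ≤ w (∑ i ∈ s, f i)) (hsep : ∀ i ∈ s, w (f i) = c → i = j) :
    (c : WithTop ℤ) < w (f j - ∑ i ∈ s, f i) := by
  rw [map_sum_eq_inf w hinj] at hc
  rw [← Finset.add_sum_erase s f hj, sub_add_cancel_left, w.map_neg]
  refine w.map_lt_sum WithTop.coe_ne_top fun i hi => lt_of_le_of_ne ?_ fun h => ?_
  · exact hc.trans (Finset.inf_le (Finset.mem_of_mem_erase hi))
  · exact Finset.ne_of_mem_erase hi (hsep i (Finset.mem_of_mem_erase hi) h.symm)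

end Valuation

section Residue

variable {L 𝕜 : Type*} [Field L] [Field 𝕜] {w : AddValuation L (WithTop ℤ)}
  (res : vintegers w →+* 𝕜)

theorem vred_of_nonneg {x : L} (hx : 0 ≤ w x) : vred w res x = res ⟨x, hx⟩ := dif_pos hx

theorem vred_of_neg {x : L} (hx : w x < 0) : vred w res x = 0 := dif_neg (not_le.mpr hx)

theorem vred_mul {x y : L} (hx : 0 ≤ w x) (hy : 0 ≤ w y) :
    vred w res (x * y) = vred w res x * vred w res y := by
  rw [vred_of_nonneg res hx, vred_of_nonneg res hy,
    vred_of_nonneg res ((vintegers w).mul_mem hx hy), ← map_mul]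
  rfl

theorem vred_pow {x : L} (hx : 0 ≤ w x) (k : ℕ) : vred w res (x ^ k) = vred w res x ^ k := by
  rw [vred_of_nonneg res hx, vred_of_nonneg res ((vintegers w).pow_mem hx k), ← map_pow]
  rfl

theorem vred_sum {ι : Type*} {s : Finset ι} {f : ι → L} (hf : ∀ i ∈ s, 0 ≤ w (f i)) :
    vred w res (∑ i ∈ s, f i) = ∑ i ∈ s, vred w res (f i) := by
  classical
  induction s using Finset.cons_induction with
  | empty =>
    rw [Finset.sum_empty, Finset.sum_empty, vred_of_nonneg res (x := 0) (by simp), ← map_zero res]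
    rfl
  | cons a s ha ih =>
    have hs : 0 ≤ w (∑ i ∈ s, f i) := w.map_le_sum fun i hi => hf i (Finset.mem_cons_of_mem hi)
    have ha : 0 ≤ w (f a) := hf a (Finset.mem_cons_self a s)
    rw [Finset.sum_cons, Finset.sum_cons, ← ih fun i hi => hf i (Finset.mem_cons_of_mem hi),
      vred_of_nonneg res ha, vred_of_nonneg res hs,
      vred_of_nonneg res ((vintegers w).add_mem ha hs), ← map_add]
    rfl

theorem vred_eq_of_lt_map_sub (hker : ∀ x : vintegers w, res x = 0 ↔ 0 < w (x : L))
    {x y : L} (hy : 0 ≤ w y) (hxy : 0 < w (x - y)) : vred w res x = vred w res y := by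
  have hx : 0 ≤ w x := by simpa using w.map_le_add hxy.le hy
  rw [vred_of_nonneg res hx, vred_of_nonneg res hy, ← sub_eq_zero, ← map_sub]
  exact (hker _).mpr hxy

theorem vred_mul_one_add_pow (hker : ∀ x : vintegers w, res x = 0 ↔ 0 < w (x : L))
    (x : L) {ε : L} (hε : 0 < w ε) (k : ℕ) :
    vred w res (x * (1 + ε) ^ k) = vred w res x := by
  have hu := map_one_add_eq_zero w hε
  have hwx : w (x * (1 + ε) ^ k) = w x := by rw [w.map_mul, w.map_pow, hu, nsmul_zero, add_zero]
  by_cases hx : 0 ≤ w x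
  · have hu1 : vred w res (1 + ε) = 1 := by
      rw [vred_eq_of_lt_map_sub res hker (y := 1) (by simp) (by rwa [add_sub_cancel_left]),
        vred_of_nonneg res (by simp), ← map_one res]
      rfl
    rw [vred_mul res hx (w.map_pow _ k ▸ nsmul_nonneg hu.ge k), vred_pow res hu.ge, hu1, one_pow,
      mul_one]
  · rw [not_le] at hx
    rw [vred_of_neg res hx, vred_of_neg res (hwx ▸ hx)]

end Residue

section PowerBasis

variable {K L : Type*} [Field K] [Field L] [Algebra K L]
  {v : AddValuation K (WithTop ℤ)} {w : AddValuation L (WithTop ℤ)} {n : ℕ} {β : L}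

theorem modEq_of_map_algebraMap_mul_pow (hcompat : ∀ x : K, w (algebraMap K L x) = n • v x)
    (hβ : w β = ((1 : ℤ) : WithTop ℤ)) {a : K} {i : ℕ} {c : ℤ}
    (h : w (algebraMap K L a * β ^ i) = c) : (i : ℤ) ≡ c [ZMOD n] := by
  have ha : a ≠ 0 := by rintro rfl; simp at h
  obtain ⟨t, ht⟩ := WithTop.ne_top_iff_exists.mp (v.ne_top_iff.mpr ha)
  rw [w.map_mul, map_pow_of_map_eq_one w hβ, hcompat, ← ht, ← WithTop.coe_nsmul,
    ← WithTop.coe_natCast, ← WithTop.coe_add, WithTop.coe_inj, nsmul_eq_mul] at h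
  exact Int.modEq_iff_dvd.mpr ⟨t, by rw [← h]; ring⟩

theorem eq_of_map_algebraMap_mul_pow_eq (hcompat : ∀ x : K, w (algebraMap K L x) = n • v x)
    (hβ : w β = ((1 : ℤ) : WithTop ℤ)) (a : ℕ → K) :
    ∀ i ∈ Finset.range n, ∀ j ∈ Finset.range n,
      w (algebraMap K L (a i) * β ^ i) = w (algebraMap K L (a j) * β ^ j) →
      w (algebraMap K L (a i) * β ^ i) ≠ ⊤ → i = j := by
  intro i hi j hj heq hne
  obtain ⟨c, hc⟩ := WithTop.ne_top_iff_exists.mp hne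
  have hij := (modEq_of_map_algebraMap_mul_pow hcompat hβ hc.symm).trans
    (modEq_of_map_algebraMap_mul_pow hcompat hβ (hc.trans heq).symm).symm
  exact Nat.ModEq.eq_of_lt_of_lt (Int.natCast_modEq_iff.mp hij) (Finset.mem_range.mp hi)
    (Finset.mem_range.mp hj)

theorem map_sum_algebraMap_mul_pow (hcompat : ∀ x : K, w (algebraMap K L x) = n • v x)
    (hβ : w β = ((1 : ℤ) : WithTop ℤ)) (a : ℕ → K) :
    w (∑ i ∈ Finset.range n, algebraMap K L (a i) * β ^ i) =
      (Finset.range n).inf fun i => w (algebraMap K L (a i) * β ^ i) :=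
  map_sum_eq_inf w (eq_of_map_algebraMap_mul_pow_eq hcompat hβ a)

theorem lt_map_sub_sum_algebraMap_mul_pow (hcompat : ∀ x : K, w (algebraMap K L x) = n • v x)
    (hβ : w β = ((1 : ℤ) : WithTop ℤ)) (a : ℕ → K) {j : ℕ} (hj : j < n) {c : ℤ}
    (hjc : (j : ℤ) ≡ c [ZMOD n])
    (hc : (c : WithTop ℤ) ≤ w (∑ i ∈ Finset.range n, algebraMap K L (a i) * β ^ i)) :
    (c : WithTop ℤ) < w (algebraMap K L (a j) * β ^ j -
      ∑ i ∈ Finset.range n, algebraMap K L (a i) * β ^ i) := by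
  refine lt_map_sub_sum w (Finset.mem_range.mpr hj)
    (eq_of_map_algebraMap_mul_pow_eq hcompat hβ a) hc fun i hi hic => ?_
  have hij := (modEq_of_map_algebraMap_mul_pow hcompat hβ hic).trans hjc.symm
  exact Nat.ModEq.eq_of_lt_of_lt (Int.natCast_modEq_iff.mp hij) (Finset.mem_range.mp hi) hj

theorem natDegree_minpoly_eq (hcompat : ∀ x : K, w (algebraMap K L x) = n • v x)
    (hβ : w β = ((1 : ℤ) : WithTop ℤ)) (hn : 0 < n) (hfinrank : Module.finrank K L = n) :
    (minpoly K β).natDegree = n := by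
  have : FiniteDimensional K L := Module.finite_of_finrank_pos (hfinrank ▸ hn)
  refine le_antisymm (hfinrank ▸ minpoly.natDegree_le β) (not_lt.mp fun hlt => ?_)
  have hsum := map_sum_algebraMap_mul_pow hcompat hβ (minpoly K β).coeff
  simp only [← Algebra.smul_def, ← aeval_eq_sum_range' hlt, minpoly.aeval, w.map_zero] at hsum
  have hlead := Finset.inf_le (f := fun i => w ((minpoly K β).coeff i • β ^ i))
    (Finset.mem_range.mpr hlt)
  rw [← hsum, top_le_iff, (minpoly.monic (.of_finite K β)).coeff_natDegree, one_smul,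
    map_pow_of_map_eq_one w hβ] at hlead
  exact WithTop.natCast_ne_top _ hlead

theorem sum_range_algebraMap_coeff_sub_mul_pow {φ ψ : K[X]} (hn : n ≠ 0)
    (hφ : IsMonicOfDegree φ n) (hψ : IsMonicOfDegree ψ n) (x : L) :
    ∑ i ∈ Finset.range n, algebraMap K L (φ.coeff i - ψ.coeff i) * x ^ i =
      aeval x φ - aeval x ψ := by
  have hlt : (φ - ψ).natDegree < n := hφ.natDegree_sub_lt hn hψ
  rw [← map_sub (aeval (R := K) x), aeval_eq_sum_range' hlt]
  exact Finset.sum_congr rfl fun i _ => by rw [coeff_sub, Algebra.smul_def]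

theorem sum_range_algebraMap_coeff_sub_minpoly_mul_pow
    (hcompat : ∀ x : K, w (algebraMap K L x) = n • v x) (hβ : w β = ((1 : ℤ) : WithTop ℤ))
    (hn : 0 < n) (hfinrank : Module.finrank K L = n) {φ : K[X]} (hφ : IsMonicOfDegree φ n) :
    ∑ i ∈ Finset.range n, algebraMap K L (φ.coeff i - (minpoly K β).coeff i) * β ^ i =
      aeval β φ := by
  have : FiniteDimensional K L := Module.finite_of_finrank_pos (hfinrank ▸ hn)
  rw [sum_range_algebraMap_coeff_sub_mul_pow hn.ne' hφ
    ⟨natDegree_minpoly_eq hcompat hβ hn hfinrank, minpoly.monic (.of_finite K β)⟩,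
    minpoly.aeval, sub_zero]

end PowerBasis

section RamificationPolynomial

variable {K L : Type*} [Field K] [Field L] [Algebra K L]

theorem aeval_mul_add_eq_pow_mul_rhoEval {φ : K[X]} {n : ℕ} (hφ : φ.natDegree ≤ n) {α : L}
    (hα : α ≠ 0) (z : L) : aeval (α * z + α) φ = α ^ n * rhoEval φ α n z := by
  have hpow : ∀ k : ℕ, α ^ n * α ^ ((k : ℤ) - n) = α ^ k := fun k => by
    rw [← zpow_natCast, ← zpow_add₀ hα, add_sub_cancel, zpow_natCast]
  calc aeval (α * z + α) φ
      = ∑ k ∈ Finset.range (n + 1), ∑ i ∈ Finset.range (k + 1),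
          (k.choose i : L) * algebraMap K L (φ.coeff k) * α ^ k * z ^ i := by
        rw [aeval_eq_sum_range' (Nat.lt_succ_of_le hφ)]
        refine Finset.sum_congr rfl fun k _ => ?_
        rw [Algebra.smul_def, ← mul_add_one, mul_pow, add_pow, Finset.mul_sum, Finset.mul_sum]
        refine Finset.sum_congr rfl fun i _ => ?_
        ring
    _ = ∑ i ∈ Finset.range (n + 1), ∑ k ∈ Finset.Icc i n,
          (k.choose i : L) * algebraMap K L (φ.coeff k) * α ^ k * z ^ i :=
        Finset.sum_comm' fun k i => by simp only [Finset.mem_range, Finset.mem_Icc]; omega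
    _ = α ^ n * rhoEval φ α n z := by
        simp only [rhoEval, rho, Finset.mul_sum, Finset.sum_mul]
        refine Finset.sum_congr rfl fun i _ => Finset.sum_congr rfl fun k _ => ?_
        rw [← hpow k]
        ring

variable (w : AddValuation L (WithTop ℤ)) (φ : K[X]) (α : L) (n m : ℕ)

theorem coe_contExpZ_le {i : ℕ} (hi : i ∈ Finset.range (n + 1)) :
    (contExpZ w φ α n m : WithTop ℤ) ≤ w (rho φ α n i) + ((i * m : ℕ) : WithTop ℤ) :=
  (WithTop.coe_untopD_le _ _).trans
    (Finset.inf_le (f := fun i => w (rho φ α n i) + ((i * m : ℕ) : WithTop ℤ)) hi)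

theorem coe_contExpZ_le_map_rhoEval {z : L} (hz : w z = (m : WithTop ℤ)) :
    (contExpZ w φ α n m : WithTop ℤ) ≤ w (rhoEval φ α n z) :=
  w.map_le_sum fun i hi => by
    rw [w.map_mul, w.map_pow, hz, ← WithTop.coe_natCast, ← WithTop.coe_nsmul, nsmul_eq_mul,
      ← Nat.cast_mul, WithTop.coe_natCast]
    exact coe_contExpZ_le w φ α n m hi

variable {𝕜 : Type*} [Field 𝕜] (res : vintegers w →+* 𝕜)

theorem eval_SmPoly_vred (hα : w α = ((1 : ℤ) : WithTop ℤ)) {γ : L} (hγ : 0 ≤ w γ) :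
    (SmPoly w res φ α n m).eval (vred w res γ) =
      vred w res (rhoEval φ α n (γ * α ^ m) * α ^ (-contExpZ w φ α n m)) := by
  have hα0 : α ≠ 0 := w.ne_top_iff.mp (by simp [hα])
  have hc := fun i (hi : i ∈ Finset.range (n + 1)) => coe_contExpZ_le w φ α n m hi
  rw [SmPoly]
  generalize contExpZ w φ α n m = c at hc ⊢
  have hcoeff : ∀ i ∈ Finset.range (n + 1), 0 ≤ w (rho φ α n i * α ^ ((i * m : ℤ) - c)) := by
    intro i hi
    rw [w.map_mul, map_zpow_of_map_eq_one w hα, sub_eq_add_neg, WithTop.coe_add, ← add_assoc]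
    exact nonneg_add_neg_of_coe_le (by exact_mod_cast hc i hi)
  have hγi : ∀ i : ℕ, 0 ≤ w (γ ^ i) := fun i => w.map_pow γ i ▸ nsmul_nonneg hγ i
  have hexpand : rhoEval φ α n (γ * α ^ m) * α ^ (-c) =
      ∑ i ∈ Finset.range (n + 1), rho φ α n i * α ^ ((i * m : ℤ) - c) * γ ^ i := by
    rw [rhoEval, Finset.sum_mul]
    refine Finset.sum_congr rfl fun i _ => ?_
    rw [sub_eq_add_neg, zpow_add₀ hα0, mul_comm (i : ℤ), zpow_mul, zpow_natCast, zpow_natCast]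
    ring
  rw [hexpand, vred_sum res fun i hi => w.map_mul _ _ ▸ add_nonneg (hcoeff i hi) (hγi i),
    eval_finsetSum]
  refine Finset.sum_congr rfl fun i hi => ?_
  rw [eval_mul, eval_pow, eval_C, eval_X, vred_mul res (hcoeff i hi) (hγi i), vred_pow res hγ]

end RamificationPolynomial

section Deformation

variable {L 𝕜 : Type*} [Field L] [Field 𝕜] {w : AddValuation L (WithTop ℤ)}
  (res : vintegers w →+* 𝕜)

/-- Dividing by `α^(n+c)` and writing `α + γα^(m+1) = α (1 + γα^m)`, the hypothesis says that
`(a / α^(n-k+c)) (1 + γα^m)^k` and `R / α^c` have the same residue. -/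
theorem vred_mul_zpow_eq_of_lt_map_sub (hker : ∀ x : vintegers w, res x = 0 ↔ 0 < w (x : L))
    {α γ : L} (hα : w α = ((1 : ℤ) : WithTop ℤ)) {m : ℕ} (hε : 0 < w (γ * α ^ m))
    {a R : L} {n k : ℕ} {c : ℤ} (hR : (c : WithTop ℤ) ≤ w R)
    (h : (((n : ℤ) + c : ℤ) : WithTop ℤ) < w (a * (α + γ * α ^ (m + 1)) ^ k - α ^ n * R)) :
    vred w res (a * α ^ (-(((n : ℤ) - k) + c))) = vred w res (R * α ^ (-c)) := by
  have hα0 : α ≠ 0 := w.ne_top_iff.mp (by simp [hα])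
  set x := a * α ^ (-(((n : ℤ) - k) + c))
  have hfactor : a * (α + γ * α ^ (m + 1)) ^ k - α ^ n * R =
      α ^ ((n : ℤ) + c) * (x * (1 + γ * α ^ m) ^ k - R * α ^ (-c)) := by
    have hk : α ^ ((n : ℤ) + c) * α ^ (-(((n : ℤ) - k) + c)) = α ^ k := by
      rw [← zpow_add₀ hα0, ← zpow_natCast]; ring_nf
    have hn : α ^ ((n : ℤ) + c) * α ^ (-c) = α ^ n := by
      rw [← zpow_add₀ hα0, ← zpow_natCast]; ring_nf
    rw [show α + γ * α ^ (m + 1) = α * (1 + γ * α ^ m) by ring, mul_pow, ← hk, ← hn]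
    ring
  have hdiff : 0 < w (x * (1 + γ * α ^ m) ^ k - R * α ^ (-c)) := by
    rw [hfactor, w.map_mul, map_zpow_of_map_eq_one w hα] at h
    nth_rw 1 [← add_zero (((n : ℤ) + c : ℤ) : WithTop ℤ)] at h
    exact (WithTop.add_lt_add_iff_left WithTop.coe_ne_top).mp h
  have hRc : 0 ≤ w (R * α ^ (-c)) := by
    rw [w.map_mul, map_zpow_of_map_eq_one w hα]
    exact nonneg_add_neg_of_coe_le hR
  rw [← vred_mul_one_add_pow res hker x hε k]
  exact vred_eq_of_lt_map_sub res hker hRc hdiff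

end Deformation

end RamificationStmt19

open RamificationStmt19 in
theorem stmt19_general {K L 𝕜 : Type*} [Field K] [Field L]
    [Field 𝕜] [Algebra K L]
    (v : AddValuation K (WithTop ℤ))
    (w : AddValuation L (WithTop ℤ))
    (res : vintegers w →+* 𝕜)
    (hres_ker : ∀ x : vintegers w, res x = 0 ↔ 0 < w (x : L))
    (φ : Polynomial K) (n : ℕ) (hn : 0 < n) (hdeg : φ.natDegree = n)
    (hEis : IsEisenstein v φ)
    (α : L) (hα : w α = ((1 : ℤ) : WithTop ℤ))
    (hfinrank : Module.finrank K L = n)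
    (hcompat : ∀ x : K, w (algebraMap K L x) = n • v x)
    (γ : L) (hγ : w γ = (0 : WithTop ℤ)) (m : ℕ) (hm : 0 < m)
    (β : L) (hβ : β = α + γ * α ^ (m + 1))
    (ψ : Polynomial K) (hψ : ψ = minpoly K β) :
    -- (a)
    ((∑ i ∈ Finset.range n, algebraMap K L (φ.coeff i - ψ.coeff i) * β ^ i =
        α ^ n * rhoEval φ α n (γ * α ^ m)) ∧
      (∀ j < n, ∀ c : ℤ, w (rhoEval φ α n (γ * α ^ m)) = (c : WithTop ℤ) →
        (j : ℤ) ≡ c [ZMOD (n : ℤ)] →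
        w (α ^ n * rhoEval φ α n (γ * α ^ m)) <
          w (algebraMap K L (φ.coeff j - ψ.coeff j) * β ^ j -
              α ^ n * rhoEval φ α n (γ * α ^ m)))) ∧
    -- (b)
    (∀ k < n, (k : ℤ) ≡ contExpZ w φ α n m [ZMOD (n : ℤ)] →
      vred w res (algebraMap K L (φ.coeff k - ψ.coeff k) *
          α ^ (-(((n : ℤ) - k) + contExpZ w φ α n m))) =
        (SmPoly w res φ α n m).eval (vred w res γ)) := by
  subst hψ
  have hwz : w (γ * α ^ m) = (m : WithTop ℤ) := by
    rw [w.map_mul, hγ, map_pow_of_map_eq_one w hα, zero_add]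
  have hε : 0 < w (γ * α ^ m) := hwz ▸ by exact_mod_cast hm
  have hwβ : w β = ((1 : ℤ) : WithTop ℤ) := by
    rw [hβ, show α + γ * α ^ (m + 1) = α * (1 + γ * α ^ m) by ring, w.map_mul, hα,
      map_one_add_eq_zero w hε, add_zero]
  have key : ∑ i ∈ Finset.range n, algebraMap K L (φ.coeff i - (minpoly K β).coeff i) * β ^ i =
      α ^ n * rhoEval φ α n (γ * α ^ m) := by
    rw [sum_range_algebraMap_coeff_sub_minpoly_mul_pow hcompat hwβ hn hfinrank ⟨hdeg, hEis.1⟩,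
      hβ, show α + γ * α ^ (m + 1) = α * (γ * α ^ m) + α by ring,
      aeval_mul_add_eq_pow_mul_rhoEval hdeg.le (w.ne_top_iff.mp (by simp [hα]))]
  have hwS : w (α ^ n * rhoEval φ α n (γ * α ^ m)) = n + w (rhoEval φ α n (γ * α ^ m)) := by
    rw [w.map_mul, map_pow_of_map_eq_one w hα]
  refine ⟨⟨key, fun j hj c hc hjc => ?_⟩, fun k hk hkc => ?_⟩
  · have hS : w (α ^ n * rhoEval φ α n (γ * α ^ m)) = (((n : ℤ) + c : ℤ) : WithTop ℤ) := by
      rw [hwS, hc]; norm_cast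
    rw [hS, ← key]
    exact lt_map_sub_sum_algebraMap_mul_pow hcompat hwβ _ hj
      (hjc.trans Int.add_modEq_left.symm) (key ▸ hS.ge)
  · have hc := coe_contExpZ_le_map_rhoEval w φ α n m hwz
    rw [eval_SmPoly_vred w φ α n m res hα hγ.ge]
    refine vred_mul_zpow_eq_of_lt_map_sub res hres_ker hα hε hc ?_
    rw [← hβ, ← key]
    refine lt_map_sub_sum_algebraMap_mul_pow hcompat hwβ
      (fun i => φ.coeff i - (minpoly K β).coeff i) hk (hkc.trans Int.add_modEq_left.symm) ?_
    rw [key, hwS, WithTop.coe_add, WithTop.coe_natCast]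
    exact add_le_add_right hc _

open RamificationStmt19 in
/-- **Monge's deformation.** Let `φ ∈ O_K[x]` be Eisenstein of degree `n` with
root `α`, `ρ` its ramification polynomial, and let `β = α + γ·α^{m+1}` with `v(γ) = 0`,
`m ∈ ℤ_{>0}`, be another uniformizer of `L = K(α)` with minimal polynomial `ψ`.  Then:
(a) `∑_{i=0}^{n−1} (φ_i − ψ_i)·β^i = α^n·ρ(γα^m)`; moreover if `0 ≤ j < n` and
`j ≡ v_α(ρ(γα^m)) mod n`, then `(φ_j − ψ_j)·β^j ∼ α^n·ρ(γα^m)` (equal up to higher-valuation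
terms);
(b) if `0 ≤ k < n` and `k ≡ c mod n`, where `c = min_{0≤i≤n}(v_α(ρ_i) + i·m)`, then
`residue((φ_k − ψ_k)/(α^{n−k}·α^c)) = S_m(γ̄)`. -/
theorem stmt19 {p : ℕ} (hp : p.Prime) {K L 𝕜 : Type*} [Field K] [CharZero K] [Field L]
    [Field 𝕜] [Algebra K L]
    (v : AddValuation K (WithTop ℤ)) (π : K) (hπ : v π = ((1 : ℤ) : WithTop ℤ))
    (hresidue_char : 0 < v (p : K))
    (w : AddValuation L (WithTop ℤ))
    (res : vintegers w →+* 𝕜) (hres_surj : Function.Surjective res)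
    (hres_ker : ∀ x : vintegers w, res x = 0 ↔ 0 < w (x : L))
    (φ : Polynomial K) (n : ℕ) (hn : 0 < n) (hdeg : φ.natDegree = n)
    (hEis : IsEisenstein v φ)
    (α : L) (hroot : Polynomial.aeval α φ = 0) (hα : w α = ((1 : ℤ) : WithTop ℤ))
    (hgen : Algebra.adjoin K {α} = ⊤) (hfinrank : Module.finrank K L = n)
    (hcompat : ∀ x : K, w (algebraMap K L x) = n • v x)
    (γ : L) (hγ : w γ = (0 : WithTop ℤ)) (m : ℕ) (hm : 0 < m)
    (β : L) (hβ : β = α + γ * α ^ (m + 1))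
    (ψ : Polynomial K) (hψ : ψ = minpoly K β) :
    -- (a)
    ((∑ i ∈ Finset.range n, algebraMap K L (φ.coeff i - ψ.coeff i) * β ^ i =
        α ^ n * rhoEval φ α n (γ * α ^ m)) ∧
      (∀ j < n, ∀ c : ℤ, w (rhoEval φ α n (γ * α ^ m)) = (c : WithTop ℤ) →
        (j : ℤ) ≡ c [ZMOD (n : ℤ)] →
        w (α ^ n * rhoEval φ α n (γ * α ^ m)) <
          w (algebraMap K L (φ.coeff j - ψ.coeff j) * β ^ j -
              α ^ n * rhoEval φ α n (γ * α ^ m)))) ∧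
    -- (b)
    (∀ k < n, (k : ℤ) ≡ contExpZ w φ α n m [ZMOD (n : ℤ)] →
      vred w res (algebraMap K L (φ.coeff k - ψ.coeff k) *
          α ^ (-(((n : ℤ) - k) + contExpZ w φ α n m))) =
        (SmPoly w res φ α n m).eval (vred w res γ)) :=
  stmt19_general v w res hres_ker φ n hn hdeg hEis α hα hfinrank hcompat γ hγ m hm β hβ ψ hψ
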